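/- Let $T$ be a sparse $1$-tree of tri-tiles with top $\vec{P}_T$ in a sparse rank-1 collection $\vec{\mathbf{P}}$. Then for every $\vec{Q} \in T$ with $Q_1 < Q_{T,1}$ (strict tile ordering: $I_{\vec{Q}} \subsetneq I_T$ and $3\omega_{T,1} \subseteq 3\omega_{Q_1}$), and every $\xi_0 \in \omega_{T,1}$, one has $\mathrm{dist}(\xi_0, \omega_{Q_3}) \sim |\omega_{Q_3}|$ with absolute implicit constants; i.e., the collection $\{\omega_{Q_3}\}_{\vec{Q} \in T}$ is lacunary around $\xi_0$. -/
import Mathlib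


/-- An interval, given by its endpoints. -/
abbrev Iv := ℝ × ℝ

/-- Length of an interval. -/
noncomputable def ilen (p : Iv) : ℝ := p.2 - p.1

/-- The interval as a set. -/
noncomputable def iset (p : Iv) : Set ℝ := Set.Icc p.1 p.2

/-- The center of an interval. -/
noncomputable def imid (p : Iv) : ℝ := (p.1 + p.2) / 2

/-- The concentric dilate `c·p` of an interval. -/
noncomputable def idil (c : ℝ) (p : Iv) : Iv :=
  (imid p - c * ilen p / 2, imid p + c * ilen p / 2)

/-- A tri-tile: a common spatial interval and three frequency intervals. -/
structure TriTile where
  I : Iv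
  ω : Fin 3 → Iv

/-- in a sparse rank-1 collection, for a 1-tree with top `P_T` and a tri-tile
`Q` of the tree with `Q₁ < Q_{T,1}`, the interval `ω_{Q₃}` is lacunary around any
`ξ₀ ∈ ω_{T,1}`: `dist(ξ₀, ω_{Q₃}) ∼ |ω_{Q₃}|` with absolute constants. -/
theorem stmt_9 : ∃ c C : ℝ, 0 < c ∧ 0 < C ∧
    ∀ PT Q : TriTile,
      (∀ i, 0 < ilen (PT.ω i)) → (∀ i, 0 < ilen (Q.ω i)) →
      0 < ilen PT.I → 0 < ilen Q.I →
      -- frequency cube structure: all three frequency intervals have the same length,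
      (∀ i, ilen (PT.ω i) = ilen (PT.ω 0)) → (∀ i, ilen (Q.ω i) = ilen (Q.ω 0)) →
      -- and neighbouring frequency components are a few steps apart
      |imid (PT.ω 0) - imid (PT.ω 2)| ≤ 10 * ilen (PT.ω 0) →
      |imid (Q.ω 0) - imid (Q.ω 2)| ≤ 10 * ilen (Q.ω 0) →
      -- Q₁ < Q_{T,1} : I_Q ⊊ I_T and 3ω_{T,1} ⊆ 3ω_{Q₁}
      iset Q.I ⊂ iset PT.I →
      iset (idil 3 (PT.ω 0)) ⊆ iset (idil 3 (Q.ω 0)) →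
      -- sparseness : 10^9 |ω_{T,1}| < |ω_{Q₁}|
      10^9 * ilen (PT.ω 0) < ilen (Q.ω 0) →
      -- rank 1 : Q₃ ≲ Q_{T,3} but not Q₃ ≤ Q_{T,3}
      iset (idil (10^7) (PT.ω 2)) ⊆ iset (idil (10^7) (Q.ω 2)) →
      ¬ iset (idil 3 (PT.ω 2)) ⊆ iset (idil 3 (Q.ω 2)) →
      ∀ ξ₀ ∈ iset (PT.ω 0),
        c * ilen (Q.ω 2) ≤ Metric.infDist ξ₀ (iset (Q.ω 2)) ∧
        Metric.infDist ξ₀ (iset (Q.ω 2)) ≤ C * ilen (Q.ω 2) := by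
  refine ⟨1/4, 12, by norm_num, by norm_num, ?_⟩
  intro PT Q hPc hQc hPI hQI hPeq hQeq hPmid hQmid _hsub hdil3 hsparse hdil7 hnot3 ξ₀ hξ
  have hL0 : 0 < ilen (PT.ω 0) := hPc 0
  have hl0 : 0 < ilen (Q.ω 0) := hQc 0
  have hl2 : ilen (Q.ω 2) = ilen (Q.ω 0) := hQeq 2
  have hL2 : ilen (PT.ω 2) = ilen (PT.ω 0) := hPeq 2
  obtain ⟨hξ1, hξ2⟩ := hξ
  -- membership of ξ₀ in 3·(Q.ω 0)
  have hmem : ξ₀ ∈ iset (idil 3 (Q.ω 0)) := by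
    apply hdil3
    simp only [iset, idil, imid, ilen, Set.mem_Icc] at *
    constructor <;> linarith
  -- endpoint inequalities from the 10^7 dilate inclusion
  have h7a : imid (Q.ω 2) - 10^7 * ilen (Q.ω 2) / 2 ≤ imid (PT.ω 2) - 10^7 * ilen (PT.ω 2) / 2 ∧
      imid (PT.ω 2) + 10^7 * ilen (PT.ω 2) / 2 ≤ imid (Q.ω 2) + 10^7 * ilen (Q.ω 2) / 2 := by
    have h1 := hdil7 (Set.left_mem_Icc.mpr (by simp only [idil]; nlinarith [hPc 2]))
    have h2 := hdil7 (Set.right_mem_Icc.mpr (by simp only [idil]; nlinarith [hPc 2]))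
    simp only [iset, idil, Set.mem_Icc] at h1 h2
    exact ⟨h1.1, h2.2⟩
  -- from non-inclusion of 3-dilates
  have h3 : ¬ (imid (Q.ω 2) - 3 * ilen (Q.ω 2) / 2 ≤ imid (PT.ω 2) - 3 * ilen (PT.ω 2) / 2 ∧
      imid (PT.ω 2) + 3 * ilen (PT.ω 2) / 2 ≤ imid (Q.ω 2) + 3 * ilen (Q.ω 2) / 2) := by
    intro h
    exact hnot3 (by
      simp only [iset, idil]
      exact Set.Icc_subset_Icc h.1 h.2)
  rw [not_and_or] at h3
  push_neg at h3
  obtain ⟨hP1, hP2⟩ := abs_le.mp hPmid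
  obtain ⟨hQ1, hQ2⟩ := abs_le.mp hQmid
  simp only [iset, idil, Set.mem_Icc] at hmem
  -- key: |ξ₀ - imid (Q.ω 2)| bounds
  have hupper : |ξ₀ - imid (Q.ω 2)| ≤ (23/2) * ilen (Q.ω 0) := by
    rw [abs_le]
    constructor <;> [nlinarith [hmem.1]; nlinarith [hmem.2]]
  have hlower : ilen (Q.ω 0) - 12 * ilen (PT.ω 0) ≤ |ξ₀ - imid (Q.ω 2)| := by
    have hxn : |ξ₀ - imid (PT.ω 2)| ≤ (21/2) * ilen (PT.ω 0) := by
      rw [abs_le]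
      simp only [imid, ilen] at *
      constructor <;> linarith
    have hnm : 3 * (ilen (Q.ω 0) - ilen (PT.ω 0)) / 2 < |imid (PT.ω 2) - imid (Q.ω 2)| := by
      rcases h3 with h | h
      · rw [lt_abs]; right; rw [hl2, hL2] at *; linarith
      · rw [lt_abs]; left; rw [hl2, hL2] at *; linarith
    have := abs_sub_abs_le_abs_sub (imid (PT.ω 2) - imid (Q.ω 2)) (imid (PT.ω 2) - ξ₀)
    rw [show imid (PT.ω 2) - imid (Q.ω 2) - (imid (PT.ω 2) - ξ₀) = ξ₀ - imid (Q.ω 2) by ring] at this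
    rw [abs_sub_comm ξ₀ (imid (PT.ω 2))] at hxn
    linarith
  have hne : (iset (Q.ω 2)).Nonempty := Set.nonempty_Icc.mpr (by have := hQc 2; simp only [ilen] at this; linarith)
  constructor
  · rw [← not_lt]
    intro hlt
    obtain ⟨y, hy, hd⟩ := (Metric.infDist_lt_iff hne).mp hlt
    rw [Real.dist_eq] at hd
    simp only [iset, Set.mem_Icc] at hy
    have h1 : |ξ₀ - imid (Q.ω 2)| ≤ |ξ₀ - y| + ilen (Q.ω 2) / 2 := by
      have := abs_sub_abs_le_abs_sub (ξ₀ - imid (Q.ω 2)) (ξ₀ - y)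
      rw [show ξ₀ - imid (Q.ω 2) - (ξ₀ - y) = y - imid (Q.ω 2) by ring] at this
      have h2 : |y - imid (Q.ω 2)| ≤ ilen (Q.ω 2) / 2 := by
        rw [abs_le]; simp only [imid, ilen] at *; constructor <;> linarith
      linarith
    rw [hl2] at hd h1
    nlinarith [hlower, hsparse, hL0, abs_nonneg (ξ₀ - y), le_abs_self (ξ₀ - y)]
  · have hmid : imid (Q.ω 2) ∈ iset (Q.ω 2) := by
      simp only [iset, imid, Set.mem_Icc]
      have := hQc 2; simp only [ilen] at this
      constructor <;> linarith
    calc Metric.infDist ξ₀ (iset (Q.ω 2)) ≤ dist ξ₀ (imid (Q.ω 2)) :=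
          Metric.infDist_le_dist_of_mem hmid
      _ ≤ 12 * ilen (Q.ω 2) := by rw [Real.dist_eq, hl2]; linarith
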